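/- In a repeated matrix game with cε-bounded distortion (distorted payoffs eventually within cε of a fixed matrix M with value v), if both players are ε-Hannan consistent with respect to the distorted payoffs, then almost surely v − 2(c+1)ε ≤ liminf_{t→∞} u₁(σ̂₁(t), br) and limsup_{t→∞} u₁(br, σ̂₂(t)) ≤ v + 2(c+1)ε, where σ̂_p(t) are the empirical action frequencies and u₁ is computed with respect to the undistorted matrix M. -/

import Mathlib

open MeasureTheory Filter
open scoped BigOperators

/-- Expected payoff to player 1 in the matrix game `M` under mixed strategies `σ₁, σ₂`. -/
noncomputable def payoff {m n : ℕ} (M : Fin m → Fin n → ℝ)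
    (σ₁ : Fin m → ℝ) (σ₂ : Fin n → ℝ) : ℝ :=
  ∑ i, ∑ j, σ₁ i * M i j * σ₂ j

/-- The (minimax) value of the zero-sum matrix game `M`. -/
noncomputable def gameValue {m n : ℕ} (M : Fin m → Fin n → ℝ) : ℝ :=
  ⨅ σ₂ : stdSimplex ℝ (Fin n), ⨆ σ₁ : stdSimplex ℝ (Fin m), payoff M σ₁.1 σ₂.1

/-!
Only weak duality is needed: for the empirical frequencies, `u₁(σ̂₁(t), br) ≤ v ≤ u₁(br, σ̂₂(t))`.
The gap between the two outer cumulative payoffs changes by at most `2 (t₀ + t c ε)` when `M` is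
replaced by the distorted payoffs, and for the distorted payoffs the gap is exactly the sum of the
two players' regrets, because the game is zero-sum. Dividing by `t`, ε-Hannan consistency bounds
the limsup of the normalised gap by `2 c ε + 2 ε`, and the sandwich gives both bounds.
-/

open Finset

section FiniteExtrema

variable {ι : Type*} [Finite ι] [Nonempty ι]

lemma ciSup_le_ciSup_add {f g : ι → ℝ} {a : ℝ} (h : ∀ i, f i ≤ g i + a) :
    ⨆ i, f i ≤ (⨆ i, g i) + a :=
  ciSup_le fun i => (h i).trans (by gcongr; exact le_ciSup (Set.finite_range g).bddAbove i)

lemma ciInf_le_ciInf_add {f g : ι → ℝ} {a : ℝ} (h : ∀ i, f i ≤ g i + a) :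
    ⨅ i, f i ≤ (⨅ i, g i) + a :=
  sub_le_iff_le_add.1 <| le_ciInf fun i =>
    sub_le_iff_le_add.2 <| (ciInf_le (Set.finite_range f).bddBelow i).trans (h i)

lemma ciSup_const_sub (a : ℝ) (f : ι → ℝ) : ⨆ i, (a - f i) = a - ⨅ i, f i := by
  refine le_antisymm (ciSup_le fun i => ?_) ?_
  · exact sub_le_sub_left (ciInf_le (Set.finite_range f).bddBelow i) a
  · refine sub_le_comm.1 (le_ciInf fun i => sub_le_comm.1 ?_)
    exact le_ciSup (Set.finite_range fun i => a - f i).bddAbove i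

end FiniteExtrema

section StdSimplex

variable {ι : Type*} [Fintype ι] {w : ι → ℝ}

lemma sum_mul_le_ciSup (hw : w ∈ stdSimplex ℝ ι) (f : ι → ℝ) : ∑ i, w i * f i ≤ ⨆ i, f i :=
  calc ∑ i, w i * f i ≤ ∑ i, w i * ⨆ i, f i := by
        gcongr with i
        exacts [hw.1 i, le_ciSup (Set.finite_range f).bddAbove i]
    _ = ⨆ i, f i := by rw [← sum_mul, hw.2, one_mul]

lemma ciInf_le_sum_mul (hw : w ∈ stdSimplex ℝ ι) (f : ι → ℝ) : ⨅ i, f i ≤ ∑ i, w i * f i :=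
  calc ⨅ i, f i = ∑ i, w i * ⨅ i, f i := by rw [← sum_mul, hw.2, one_mul]
    _ ≤ ∑ i, w i * f i := by
        gcongr with i
        exacts [hw.1 i, ciInf_le (Set.finite_range f).bddBelow i]

end StdSimplex

section EmpiricalFrequency

variable {ι : Type*} [Fintype ι] [DecidableEq ι]

/-- The paper's `σ̂(t)`; at `t = 0` it is the zero vector, since `0 / 0 = 0`. -/
noncomputable def empiricalFreq (a : ℕ → ι) (t : ℕ) (i : ι) : ℝ :=
  #{s ∈ range t | a s = i} / t

lemma sum_empiricalFreq_mul (a : ℕ → ι) (t : ℕ) (f : ι → ℝ) :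
    ∑ i, empiricalFreq a t i * f i = (∑ s ∈ range t, f (a s)) / t := by
  simp_rw [empiricalFreq, div_mul_eq_mul_div, ← sum_div, ← sum_fiberwise (range t) a]
  congr 1
  refine sum_congr rfl fun i _ => ?_
  rw [← nsmul_eq_mul, ← sum_const]
  exact sum_congr rfl fun s hs => by rw [(mem_filter.1 hs).2]

lemma empiricalFreq_mem_stdSimplex (a : ℕ → ι) {t : ℕ} (ht : t ≠ 0) :
    empiricalFreq a t ∈ stdSimplex ℝ ι := by
  refine ⟨fun i => by unfold empiricalFreq; positivity, ?_⟩
  simpa [ht] using sum_empiricalFreq_mul a t 1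

end EmpiricalFrequency

section MatrixGame

variable {m n : ℕ} (M : Fin m → Fin n → ℝ)

lemma payoff_eq_sum_mul_sum (σ₁ : Fin m → ℝ) (σ₂ : Fin n → ℝ) :
    payoff M σ₁ σ₂ = ∑ i, σ₁ i * ∑ j, M i j * σ₂ j := by
  simp only [payoff, mul_sum, mul_assoc]

lemma payoff_eq_sum_sum_mul (σ₁ : Fin m → ℝ) (σ₂ : Fin n → ℝ) :
    payoff M σ₁ σ₂ = ∑ j, (∑ i, σ₁ i * M i j) * σ₂ j := by
  simp only [payoff, sum_mul]
  exact sum_comm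

lemma exists_abs_payoff_le : ∃ B, ∀ σ₁ ∈ stdSimplex ℝ (Fin m), ∀ σ₂ ∈ stdSimplex ℝ (Fin n),
    |payoff M σ₁ σ₂| ≤ B := by
  obtain ⟨B, hB⟩ := ((isCompact_stdSimplex ℝ (Fin m)).prod
    (isCompact_stdSimplex ℝ (Fin n))).exists_bound_of_continuousOn
    (f := fun σ : (Fin m → ℝ) × (Fin n → ℝ) => payoff M σ.1 σ.2) (by unfold payoff; fun_prop)
  exact ⟨B, fun σ₁ h₁ σ₂ h₂ => hB (σ₁, σ₂) ⟨h₁, h₂⟩⟩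

lemma bddAbove_range_payoff {σ₂ : Fin n → ℝ} (hσ₂ : σ₂ ∈ stdSimplex ℝ (Fin n)) :
    BddAbove (Set.range fun σ₁ : stdSimplex ℝ (Fin m) => payoff M σ₁ σ₂) := by
  obtain ⟨B, hB⟩ := exists_abs_payoff_le M
  exact ⟨B, Set.forall_mem_range.2 fun σ₁ => le_of_abs_le (hB σ₁ σ₁.2 σ₂ hσ₂)⟩

variable {M}

lemma gameValue_le_ciSup_sum_mul [Nonempty (Fin m)] {σ₂ : Fin n → ℝ}
    (hσ₂ : σ₂ ∈ stdSimplex ℝ (Fin n)) : gameValue M ≤ ⨆ i, ∑ j, M i j * σ₂ j := by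
  obtain ⟨B, hB⟩ := exists_abs_payoff_le M
  obtain ⟨σ₀⟩ : Nonempty (stdSimplex ℝ (Fin m)) := inferInstance
  have hbdd : BddBelow (Set.range fun τ : stdSimplex ℝ (Fin n) =>
      ⨆ σ₁ : stdSimplex ℝ (Fin m), payoff M σ₁ τ) :=
    ⟨-B, Set.forall_mem_range.2 fun τ => (neg_le_of_abs_le (hB σ₀ σ₀.2 τ τ.2)).trans
      (le_ciSup (bddAbove_range_payoff M τ.2) σ₀)⟩
  refine (ciInf_le hbdd ⟨σ₂, hσ₂⟩).trans (ciSup_le fun σ₁ => ?_)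
  rw [payoff_eq_sum_mul_sum]
  exact sum_mul_le_ciSup σ₁.2 _

lemma ciInf_sum_mul_le_gameValue [Nonempty (Fin n)] {σ₁ : Fin m → ℝ}
    (hσ₁ : σ₁ ∈ stdSimplex ℝ (Fin m)) : ⨅ j, ∑ i, σ₁ i * M i j ≤ gameValue M := by
  refine le_ciInf fun τ => le_trans ?_ (le_ciSup (bddAbove_range_payoff M τ.2) ⟨σ₁, hσ₁⟩)
  rw [payoff_eq_sum_sum_mul]
  simp_rw [mul_comm _ (τ.1 _)]
  exact ciInf_le_sum_mul τ.2 _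

lemma gameValue_le_ciSup_sum_div [Nonempty (Fin m)] (J : ℕ → Fin n) {t : ℕ} (ht : t ≠ 0) :
    gameValue M ≤ (⨆ i, ∑ s ∈ range t, M i (J s)) / t := by
  refine (gameValue_le_ciSup_sum_mul (empiricalFreq_mem_stdSimplex J ht)).trans
    (ciSup_le fun i => ?_)
  simp_rw [mul_comm (M i _), sum_empiricalFreq_mul]
  gcongr
  exact le_ciSup (f := fun i => ∑ s ∈ range t, M i (J s)) (Set.finite_range _).bddAbove i

lemma ciInf_sum_div_le_gameValue [Nonempty (Fin n)] (I : ℕ → Fin m) {t : ℕ} (ht : t ≠ 0) :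
    (⨅ j, ∑ s ∈ range t, M (I s) j) / t ≤ gameValue M := by
  refine le_trans ?_ (ciInf_sum_mul_le_gameValue (empiricalFreq_mem_stdSimplex I ht))
  refine le_ciInf fun j => ?_
  rw [sum_empiricalFreq_mul]
  gcongr
  exact ciInf_le (f := fun j => ∑ s ∈ range t, M (I s) j) (Set.finite_range _).bddBelow j

end MatrixGame

lemma sum_le_sum_add_of_abs_sub_le {x y : ℕ → ℝ} {B δ : ℝ} {t₀ : ℕ}
    (hB : ∀ s, |x s - y s| ≤ B) (hδ : ∀ s ≥ t₀, |x s - y s| ≤ δ) (t : ℕ) :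
    ∑ s ∈ range t, x s ≤ ∑ s ∈ range t, y s + (t₀ * B + t * δ) := by
  have hB₀ : 0 ≤ B := (abs_nonneg _).trans (hB 0)
  have hδ₀ : 0 ≤ δ := (abs_nonneg _).trans (hδ t₀ le_rfl)
  have hterm (s : ℕ) : x s - y s ≤ (if s < t₀ then B else 0) + δ := by
    split_ifs with hs
    · linarith [le_of_abs_le (hB s)]
    · linarith [le_of_abs_le (hδ s (not_lt.1 hs))]
  have hearly : ∑ s ∈ range t, (if s < t₀ then B else 0) ≤ t₀ * B := by
    rw [sum_ite, sum_const_zero, add_zero, sum_const, nsmul_eq_mul]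
    gcongr
    exact_mod_cast (card_le_card fun s hs => mem_range.2 (mem_filter.1 hs).2).trans
      (card_range t₀).le
  have hsum := sum_le_sum fun s (_ : s ∈ range t) => hterm s
  rw [sum_sub_distrib, sum_add_distrib, sum_const, card_range, nsmul_eq_mul] at hsum
  linarith

section Regret

variable {ι κ : Type*}

noncomputable def regret (g : ℕ → ι → ℝ) (a : ℕ → ι) (t : ℕ) : ℝ :=
  (⨆ i, ∑ s ∈ range t, g s i) - ∑ s ∈ range t, g s (a s)

lemma regret_le_of_mem_Icc [Finite ι] [Nonempty ι] {g : ℕ → ι → ℝ}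
    (hg : ∀ s i, g s i ∈ Set.Icc (0 : ℝ) 1) (a : ℕ → ι) (t : ℕ) : regret g a t ≤ t := by
  have hsup : ⨆ i, ∑ s ∈ range t, g s i ≤ t := ciSup_le fun i => by
    simpa using sum_le_sum fun s (_ : s ∈ range t) => (hg s i).2
  have hnonneg : 0 ≤ ∑ s ∈ range t, g s (a s) := sum_nonneg fun s _ => (hg s (a s)).1
  rw [regret]
  linarith

lemma isBoundedUnder_regret_div [Finite ι] [Nonempty ι] {g : ℕ → ι → ℝ}
    (hg : ∀ s i, g s i ∈ Set.Icc (0 : ℝ) 1) (a : ℕ → ι) :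
    IsBoundedUnder (· ≤ ·) atTop fun t : ℕ => regret g a t / t :=
  isBoundedUnder_of ⟨1, fun t => div_le_one_of_le₀ (regret_le_of_mem_Icc hg a t) t.cast_nonneg⟩

lemma regret_add_regret [Finite κ] [Nonempty κ] (v : ℕ → ι → κ → ℝ) (I : ℕ → ι) (J : ℕ → κ)
    (t : ℕ) :
    regret (fun s i => v s i (J s)) I t + regret (fun s j => 1 - v s (I s) j) J t =
      (⨆ i, ∑ s ∈ range t, v s i (J s)) - ⨅ j, ∑ s ∈ range t, v s (I s) j := by
  simp only [regret, sum_sub_distrib, sum_const, card_range, nsmul_eq_mul, mul_one,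
    ciSup_const_sub]
  ring

lemma ciSup_sub_ciInf_le_regret_add_regret [Finite ι] [Nonempty ι] [Finite κ] [Nonempty κ]
    {M : ι → κ → ℝ} {v : ℕ → ι → κ → ℝ} {t₀ : ℕ} {δ : ℝ}
    (hM : ∀ i j, M i j ∈ Set.Icc (0 : ℝ) 1) (hv : ∀ s i j, v s i j ∈ Set.Icc (0 : ℝ) 1)
    (hd : ∀ s ≥ t₀, ∀ i j, |v s i j - M i j| ≤ δ) (I : ℕ → ι) (J : ℕ → κ) (t : ℕ) :
    (⨆ i, ∑ s ∈ range t, M i (J s)) - ⨅ j, ∑ s ∈ range t, M (I s) j ≤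
      2 * (t₀ + t * δ) +
        (regret (fun s i => v s i (J s)) I t + regret (fun s j => 1 - v s (I s) j) J t) := by
  have hsum {x y : ℕ → ℝ} (hx : ∀ s, x s ∈ Set.Icc (0 : ℝ) 1) (hy : ∀ s, y s ∈ Set.Icc (0 : ℝ) 1)
      (hxy : ∀ s ≥ t₀, |x s - y s| ≤ δ) :
      ∑ s ∈ range t, x s ≤ ∑ s ∈ range t, y s + (t₀ + t * δ) := by
    simpa using sum_le_sum_add_of_abs_sub_le (B := 1)
      (fun s => abs_sub_le_of_nonneg_of_le (hx s).1 (hx s).2 (hy s).1 (hy s).2) hxy t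
  have hrow : ⨆ i, ∑ s ∈ range t, M i (J s) ≤ (⨆ i, ∑ s ∈ range t, v s i (J s)) + (t₀ + t * δ) :=
    ciSup_le_ciSup_add fun i => hsum (fun s => hM _ _) (fun s => hv _ _ _) fun s hs => by
      rw [abs_sub_comm]; exact hd s hs _ _
  have hcol : ⨅ j, ∑ s ∈ range t, v s (I s) j ≤ (⨅ j, ∑ s ∈ range t, M (I s) j) + (t₀ + t * δ) :=
    ciInf_le_ciInf_add fun j => hsum (fun s => hv _ _ _) (fun s => hM _ _) fun s hs => hd s hs _ _
  rw [regret_add_regret]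
  linarith

lemma ciSup_sum_div_sub_ciInf_sum_div_le [Finite ι] [Nonempty ι] [Finite κ] [Nonempty κ]
    {M : ι → κ → ℝ} {v : ℕ → ι → κ → ℝ} {t₀ : ℕ} {δ : ℝ}
    (hM : ∀ i j, M i j ∈ Set.Icc (0 : ℝ) 1) (hv : ∀ s i j, v s i j ∈ Set.Icc (0 : ℝ) 1)
    (hd : ∀ s ≥ t₀, ∀ i j, |v s i j - M i j| ≤ δ) (I : ℕ → ι) (J : ℕ → κ) {t : ℕ} (ht : t ≠ 0) :
    (⨆ i, ∑ s ∈ range t, M i (J s)) / t - (⨅ j, ∑ s ∈ range t, M (I s) j) / t ≤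
      2 * δ + (2 * t₀ / t + regret (fun s i => v s i (J s)) I t / t +
        regret (fun s j => 1 - v s (I s) j) J t / t) := by
  have ht' : (t : ℝ) ≠ 0 := Nat.cast_ne_zero.2 ht
  calc _ = ((⨆ i, ∑ s ∈ range t, M i (J s)) - ⨅ j, ∑ s ∈ range t, M (I s) j) / t :=
        (sub_div ..).symm
    _ ≤ (2 * (t₀ + t * δ) + (regret (fun s i => v s i (J s)) I t +
          regret (fun s j => 1 - v s (I s) j) J t)) / t := by
        gcongr
        exact ciSup_sub_ciInf_le_regret_add_regret hM hv hd I J t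
    _ = _ := by
        field_simp
        ring

end Regret

lemma eventually_div_add_add_lt {r₁ r₂ : ℕ → ℝ} {ε₁ ε₂ η : ℝ} (K : ℝ)
    (h₁ : limsup r₁ atTop ≤ ε₁) (h₂ : limsup r₂ atTop ≤ ε₂)
    (hb₁ : IsBoundedUnder (· ≤ ·) atTop r₁) (hb₂ : IsBoundedUnder (· ≤ ·) atTop r₂)
    (hη : 0 < η) :
    ∀ᶠ t : ℕ in atTop, K / t + r₁ t + r₂ t < ε₁ + ε₂ + η := by
  filter_upwards [(tendsto_const_div_atTop_nhds_zero_nat K).eventually_lt_const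
      (by linarith : (0 : ℝ) < η / 3),
    eventually_lt_of_limsup_lt (h₁.trans_lt (by linarith : ε₁ < ε₁ + η / 3)) hb₁,
    eventually_lt_of_limsup_lt (h₂.trans_lt (by linarith : ε₂ < ε₂ + η / 3)) hb₂]
    with t h₀ h₁ h₂
  linarith

theorem gameValue_sub_le_liminf_and_limsup_le_gameValue_add {m n : ℕ} [Nonempty (Fin m)]
    [Nonempty (Fin n)] {M : Fin m → Fin n → ℝ} {v : ℕ → Fin m → Fin n → ℝ}
    {I : ℕ → Fin m} {J : ℕ → Fin n} {δ ε : ℝ}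
    (hM : ∀ i j, M i j ∈ Set.Icc (0 : ℝ) 1) (hv : ∀ s i j, v s i j ∈ Set.Icc (0 : ℝ) 1)
    (hd : ∃ t₀ : ℕ, ∀ s ≥ t₀, ∀ i j, |v s i j - M i j| ≤ δ)
    (h₁ : limsup (fun t : ℕ => regret (fun s i => v s i (J s)) I t / t) atTop ≤ ε)
    (h₂ : limsup (fun t : ℕ => regret (fun s j => 1 - v s (I s) j) J t / t) atTop ≤ ε) :
    gameValue M - 2 * (δ + ε) ≤ liminf (fun t : ℕ => (⨅ j, ∑ s ∈ range t, M (I s) j) / t) atTop ∧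
      limsup (fun t : ℕ => (⨆ i, ∑ s ∈ range t, M i (J s)) / t) atTop ≤
        gameValue M + 2 * (δ + ε) := by
  obtain ⟨t₀, hd⟩ := hd
  have hv' (s : ℕ) (j : Fin n) : 1 - v s (I s) j ∈ Set.Icc (0 : ℝ) 1 :=
    ⟨sub_nonneg.2 (hv s (I s) j).2, sub_le_self 1 (hv s (I s) j).1⟩
  have hgap (η : ℝ) (hη : 0 < η) : ∀ᶠ t : ℕ in atTop, t ≠ 0 ∧
      (⨆ i, ∑ s ∈ range t, M i (J s)) / t - (⨅ j, ∑ s ∈ range t, M (I s) j) / t ≤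
        2 * (δ + ε) + η := by
    filter_upwards [eventually_ne_atTop 0, eventually_div_add_add_lt (2 * t₀) h₁ h₂
      (isBoundedUnder_regret_div (fun s i => hv s i (J s)) I)
      (isBoundedUnder_regret_div hv' J) hη] with t ht herr
    exact ⟨ht, by linarith [ciSup_sum_div_sub_ciInf_sum_div_le hM hv hd I J ht]⟩
  constructor
  · refine le_of_forall_pos_le_add fun η hη => sub_le_iff_le_add.1 ?_
    refine le_liminf_of_le (isCoboundedUnder_ge_of_eventually_le atTop
      ((eventually_ne_atTop 0).mono fun t ht => ciInf_sum_div_le_gameValue I ht)) ?_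
    filter_upwards [hgap η hη] with t ⟨ht, hgap⟩
    linarith [gameValue_le_ciSup_sum_div (M := M) J ht]
  · refine le_of_forall_pos_le_add fun η hη => ?_
    refine limsup_le_of_le (isCoboundedUnder_le_of_eventually_le atTop
      ((eventually_ne_atTop 0).mono fun t ht => gameValue_le_ciSup_sum_div J ht)) ?_
    filter_upwards [hgap η hη] with t ⟨ht, hgap⟩
    linarith [ciInf_sum_div_le_gameValue (M := M) I ht]

theorem stmt7_general {m n : ℕ}
    {Ω : Type*} [MeasurableSpace Ω] (P : Measure Ω)
    (M : Fin m → Fin n → ℝ) (hM : ∀ i j, M i j ∈ Set.Icc (0:ℝ) 1)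
    (vtil : Ω → ℕ → Fin m → Fin n → ℝ)
    (hvtil : ∀ ω t i j, vtil ω t i j ∈ Set.Icc (0:ℝ) 1)
    (I : Ω → ℕ → Fin m) (J : Ω → ℕ → Fin n) (c ε : ℝ)
    (hdist : ∀ᵐ ω ∂P, ∃ t₀ : ℕ, ∀ t ≥ t₀, ∀ i j, |vtil ω t i j - M i j| ≤ c * ε)
    (hHC1 : ∀ᵐ ω ∂P, limsup (fun t : ℕ =>
        ((⨆ i, ∑ s ∈ Finset.range t, vtil ω s i (J ω s)) -
          ∑ s ∈ Finset.range t, vtil ω s (I ω s) (J ω s)) / (t : ℝ)) atTop ≤ ε)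
    (hHC2 : ∀ᵐ ω ∂P, limsup (fun t : ℕ =>
        ((⨆ j, ∑ s ∈ Finset.range t, (1 - vtil ω s (I ω s) j)) -
          ∑ s ∈ Finset.range t, (1 - vtil ω s (I ω s) (J ω s))) / (t : ℝ)) atTop ≤ ε) :
    ∀ᵐ ω ∂P,
      gameValue M - 2 * (c + 1) * ε ≤ liminf (fun t : ℕ =>
          (⨅ j, ∑ s ∈ Finset.range t, M (I ω s) j) / (t : ℝ)) atTop ∧
      limsup (fun t : ℕ =>
          (⨆ i, ∑ s ∈ Finset.range t, M i (J ω s)) / (t : ℝ)) atTop ≤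
        gameValue M + 2 * (c + 1) * ε := by
  filter_upwards [hdist, hHC1, hHC2] with ω hd h₁ h₂
  have : Nonempty (Fin m) := ⟨I ω 0⟩
  have : Nonempty (Fin n) := ⟨J ω 0⟩
  rw [show 2 * (c + 1) * ε = 2 * (c * ε + ε) by ring]
  exact gameValue_sub_le_liminf_and_limsup_le_gameValue_add hM (hvtil ω) hd h₁ h₂

/-- In a repeated matrix game with `cε`-bounded distortion played by two players that are
ε-Hannan consistent w.r.t. the distorted payoffs, almost surely
`v - 2(c+1)ε ≤ liminf u₁(σ̂₁(t), br)` and `limsup u₁(br, σ̂₂(t)) ≤ v + 2(c+1)ε`,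
where the best-response utilities against the empirical frequencies are computed with
respect to the undistorted matrix `M`:
`u₁(σ̂₁(t), br) = (⨅ j, Σ_{s<t} M (I s) j)/t` and
`u₁(br, σ̂₂(t)) = (⨆ i, Σ_{s<t} M i (J s))/t`. -/
theorem stmt7 {m n : ℕ} [NeZero m] [NeZero n]
    {Ω : Type*} [MeasurableSpace Ω] (P : Measure Ω) [IsProbabilityMeasure P]
    (M : Fin m → Fin n → ℝ) (hM : ∀ i j, M i j ∈ Set.Icc (0:ℝ) 1)
    (vtil : Ω → ℕ → Fin m → Fin n → ℝ)
    (hvtil : ∀ ω t i j, vtil ω t i j ∈ Set.Icc (0:ℝ) 1)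
    (I : Ω → ℕ → Fin m) (J : Ω → ℕ → Fin n) (c ε : ℝ) (hc : 0 < c) (hε : 0 < ε)
    (hdist : ∀ᵐ ω ∂P, ∃ t₀ : ℕ, ∀ t ≥ t₀, ∀ i j, |vtil ω t i j - M i j| ≤ c * ε)
    (hHC1 : ∀ᵐ ω ∂P, limsup (fun t : ℕ =>
        ((⨆ i, ∑ s ∈ Finset.range t, vtil ω s i (J ω s)) -
          ∑ s ∈ Finset.range t, vtil ω s (I ω s) (J ω s)) / (t : ℝ)) atTop ≤ ε)
    (hHC2 : ∀ᵐ ω ∂P, limsup (fun t : ℕ =>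
        ((⨆ j, ∑ s ∈ Finset.range t, (1 - vtil ω s (I ω s) j)) -
          ∑ s ∈ Finset.range t, (1 - vtil ω s (I ω s) (J ω s))) / (t : ℝ)) atTop ≤ ε) :
    ∀ᵐ ω ∂P,
      gameValue M - 2 * (c + 1) * ε ≤ liminf (fun t : ℕ =>
          (⨅ j, ∑ s ∈ Finset.range t, M (I ω s) j) / (t : ℝ)) atTop ∧
      limsup (fun t : ℕ =>
          (⨆ i, ∑ s ∈ Finset.range t, M i (J ω s)) / (t : ℝ)) atTop ≤
        gameValue M + 2 * (c + 1) * ε :=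
  stmt7_general P M hM vtil hvtil I J c ε hdist hHC1 hHC2
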